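/- Let 0 → C →e Ω →p A⊗B → 0 be a short exact sequence of finite-dimensional real vector spaces and D(Ω) = {(ω,a,b) : p(ω)=a⊗b}. Let C(D) denote the quotient of the free real vector space on D(Ω) by the relations d₁+d₂ ∼ d₁+_A d₂, d₃+d₄ ∼ d₃+_B d₄, r·d ∼ r·_A d, r·d ∼ r·_B d (whenever the partial operations are defined). Then the map [(ω,a,b)] ↦ ω induces a well-defined linear isomorphism C(D(Ω)) ≅ Ω. -/
import Mathlib


open Function

/-- The double realization `D(Ω) = {(ω,a,b) : p(ω) = a ⊗ b}`. -/
abbrev DT (Om A B : Type*) [AddCommGroup Om] [Module ℝ Om]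
    [AddCommGroup A] [Module ℝ A] [AddCommGroup B] [Module ℝ B]
    (p : Om →ₗ[ℝ] TensorProduct ℝ A B) : Type _ :=
  {x : Om × A × B // p x.1 = x.2.1 ⊗ₜ[ℝ] x.2.2}

/-- The double-vector-bundle relation elements inside the free vector space on `D(Ω)`:
formal sums/scalar multiples identified with the partial operations `+_A`, `+_B`,
`·_A`, `·_B`. -/
abbrev RelSet (Om A B : Type*) [AddCommGroup Om] [Module ℝ Om]
    [AddCommGroup A] [Module ℝ A] [AddCommGroup B] [Module ℝ B]
    (p : Om →ₗ[ℝ] TensorProduct ℝ A B) : Set (DT Om A B p →₀ ℝ) :=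
  {f | (∃ d₁ d₂ d₃ : DT Om A B p, d₁.1.2.1 = d₂.1.2.1 ∧
          d₃.1 = (d₁.1.1 + d₂.1.1, d₁.1.2.1, d₁.1.2.2 + d₂.1.2.2) ∧
          f = Finsupp.single d₁ 1 + Finsupp.single d₂ 1 - Finsupp.single d₃ 1) ∨
       (∃ d₁ d₂ d₃ : DT Om A B p, d₁.1.2.2 = d₂.1.2.2 ∧
          d₃.1 = (d₁.1.1 + d₂.1.1, d₁.1.2.1 + d₂.1.2.1, d₁.1.2.2) ∧
          f = Finsupp.single d₁ 1 + Finsupp.single d₂ 1 - Finsupp.single d₃ 1) ∨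
       (∃ (d d' : DT Om A B p) (r : ℝ),
          d'.1 = (r • d.1.1, d.1.2.1, r • d.1.2.2) ∧
          f = r • Finsupp.single d 1 - Finsupp.single d' 1) ∨
       (∃ (d d' : DT Om A B p) (r : ℝ),
          d'.1 = (r • d.1.1, r • d.1.2.1, d.1.2.2) ∧
          f = r • Finsupp.single d 1 - Finsupp.single d' 1)}

namespace Stmt6Aux

variable {Om A B : Type*} [AddCommGroup Om] [Module ℝ Om]
    [AddCommGroup A] [Module ℝ A] [AddCommGroup B] [Module ℝ B]
    (p : Om →ₗ[ℝ] TensorProduct ℝ A B)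

abbrev Q : Type _ := (DT Om A B p →₀ ℝ) ⧸ Submodule.span ℝ (RelSet Om A B p)

noncomputable def mkS (d : DT Om A B p) : Q p := Submodule.Quotient.mk (Finsupp.single d 1)

lemma rel_zero {f : DT Om A B p →₀ ℝ} (hf : f ∈ RelSet Om A B p) :
    (Submodule.Quotient.mk f : Q p) = 0 :=
  (Submodule.Quotient.mk_eq_zero _).2 (Submodule.subset_span hf)

lemma addA (d₁ d₂ d₃ : DT Om A B p) (h : d₁.1.2.1 = d₂.1.2.1)
    (h3 : d₃.1 = (d₁.1.1 + d₂.1.1, d₁.1.2.1, d₁.1.2.2 + d₂.1.2.2)) :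
    mkS p d₁ + mkS p d₂ = mkS p d₃ := by
  have h0 := rel_zero p (Or.inl ⟨d₁, d₂, d₃, h, h3, rfl⟩)
  rw [Submodule.Quotient.mk_sub, Submodule.Quotient.mk_add, sub_eq_zero] at h0
  exact h0

lemma addB (d₁ d₂ d₃ : DT Om A B p) (h : d₁.1.2.2 = d₂.1.2.2)
    (h3 : d₃.1 = (d₁.1.1 + d₂.1.1, d₁.1.2.1 + d₂.1.2.1, d₁.1.2.2)) :
    mkS p d₁ + mkS p d₂ = mkS p d₃ := by
  have h0 := rel_zero p (Or.inr (Or.inl ⟨d₁, d₂, d₃, h, h3, rfl⟩))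
  rw [Submodule.Quotient.mk_sub, Submodule.Quotient.mk_add, sub_eq_zero] at h0
  exact h0

lemma smulA (d d' : DT Om A B p) (r : ℝ)
    (h3 : d'.1 = (r • d.1.1, d.1.2.1, r • d.1.2.2)) :
    r • mkS p d = mkS p d' := by
  have h0 := rel_zero p (Or.inr (Or.inr (Or.inl ⟨d, d', r, h3, rfl⟩)))
  rw [Submodule.Quotient.mk_sub, Submodule.Quotient.mk_smul, sub_eq_zero] at h0
  exact h0

lemma smulB (d d' : DT Om A B p) (r : ℝ)
    (h3 : d'.1 = (r • d.1.1, r • d.1.2.1, d.1.2.2)) :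
    r • mkS p d = mkS p d' := by
  have h0 := rel_zero p (Or.inr (Or.inr (Or.inr ⟨d, d', r, h3, rfl⟩)))
  rw [Submodule.Quotient.mk_sub, Submodule.Quotient.mk_smul, sub_eq_zero] at h0
  exact h0

lemma zeroA (a : A) (h : p 0 = a ⊗ₜ[ℝ] (0 : B)) :
    mkS p ⟨(0, a, 0), h⟩ = 0 := by
  have := smulA p ⟨(0, a, 0), h⟩ ⟨(0, a, 0), h⟩ 0 (by simp)
  simpa using this.symm

lemma zeroB (b : B) (h : p 0 = (0 : A) ⊗ₜ[ℝ] b) :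
    mkS p ⟨(0, 0, b), h⟩ = 0 := by
  have := smulB p ⟨(0, 0, b), h⟩ ⟨(0, 0, b), h⟩ 0 (by simp)
  simpa using this.symm

/-- key chain lemma -/
lemma chain (ω c : Om) (a : A) (b : B) (h : p ω = a ⊗ₜ[ℝ] b) (hc : p c = a ⊗ₜ[ℝ] b)
    (hwc : p (ω - c) = (0 : A) ⊗ₜ[ℝ] (0 : B)) :
    mkS p ⟨(ω - c, 0, 0), hwc⟩ + mkS p ⟨(c, a, b), hc⟩ = mkS p ⟨(ω, a, b), h⟩ := by
  have hwb : p (ω - c) = (0 : A) ⊗ₜ[ℝ] b := by simp [map_sub, h, hc]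
  have h0b : p 0 = (0 : A) ⊗ₜ[ℝ] b := by simp
  have step1 : mkS p ⟨(ω - c, 0, 0), hwc⟩ = mkS p ⟨(ω - c, 0, b), hwb⟩ := by
    have := addA p ⟨(ω - c, 0, 0), hwc⟩ ⟨(0, 0, b), h0b⟩ ⟨(ω - c, 0, b), hwb⟩ rfl (by simp)
    rw [zeroB p b h0b, add_zero] at this
    exact this
  rw [step1]
  exact addB p ⟨(ω - c, 0, b), hwb⟩ ⟨(c, a, b), hc⟩ ⟨(ω, a, b), h⟩ rfl (by simp)

noncomputable def iota : LinearMap.ker p →ₗ[ℝ] Q p where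
  toFun c := mkS p ⟨(c.1, 0, 0), by simp [LinearMap.mem_ker.mp c.2]⟩
  map_add' c₁ c₂ := by
    refine (addA p _ _ _ ?_ ?_).symm
    · rfl
    · simp
  map_smul' r c := by
    refine (smulA p _ _ r ?_).symm
    simp

variable (s : TensorProduct ℝ A B →ₗ[ℝ] Om) (hs : ∀ x, p (s x) = x)

noncomputable def beta : A →ₗ[ℝ] B →ₗ[ℝ] Q p :=
  LinearMap.mk₂ ℝ (fun a b => mkS p ⟨(s (a ⊗ₜ[ℝ] b), a, b), hs _⟩)
    (fun a₁ a₂ b => by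
      refine (addB p _ _ _ ?_ ?_).symm
      · rfl
      · simp [TensorProduct.add_tmul])
    (fun r a b => by
      refine (smulB p _ _ r ?_).symm
      simp [← TensorProduct.smul_tmul'])
    (fun a b₁ b₂ => by
      refine (addA p _ _ _ ?_ ?_).symm
      · rfl
      · simp [TensorProduct.tmul_add])
    (fun r a b => by
      refine (smulA p _ _ r ?_).symm
      simp [TensorProduct.tmul_smul])

noncomputable def tau : TensorProduct ℝ A B →ₗ[ℝ] Q p := TensorProduct.lift (beta p s hs)

@[simp] lemma tau_tmul (a : A) (b : B) :
    tau p s hs (a ⊗ₜ[ℝ] b) = mkS p ⟨(s (a ⊗ₜ[ℝ] b), a, b), hs _⟩ := rfl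

end Stmt6Aux

theorem stmt6 (A B C Om : Type*)
    [AddCommGroup A] [Module ℝ A] [FiniteDimensional ℝ A]
    [AddCommGroup B] [Module ℝ B] [FiniteDimensional ℝ B]
    [AddCommGroup C] [Module ℝ C] [FiniteDimensional ℝ C]
    [AddCommGroup Om] [Module ℝ Om] [FiniteDimensional ℝ Om]
    (e : C →ₗ[ℝ] Om) (p : Om →ₗ[ℝ] TensorProduct ℝ A B)
    (he : Injective e) (hp : Surjective p)
    (hep : LinearMap.range e = LinearMap.ker p) :
    ∃ Φ : ((DT Om A B p →₀ ℝ) ⧸ Submodule.span ℝ (RelSet Om A B p)) ≃ₗ[ℝ] Om,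
      ∀ d : DT Om A B p,
        Φ (Submodule.Quotient.mk (Finsupp.single d 1)) = d.1.1 := by
  classical
  obtain ⟨s, hs0⟩ := p.exists_rightInverse_of_surjective (LinearMap.range_eq_top.2 hp)
  have hs : ∀ x, p (s x) = x := fun x => by
    simpa using LinearMap.ext_iff.1 hs0 x
  set R := Submodule.span ℝ (RelSet Om A B p) with hR
  let π : (DT Om A B p →₀ ℝ) →ₗ[ℝ] Om :=
    Finsupp.linearCombination ℝ (fun d : DT Om A B p => d.1.1)
  have hπ : R ≤ LinearMap.ker π := by
    rw [hR, Submodule.span_le]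
    rintro f (⟨d₁, d₂, d₃, h, h3, rfl⟩ | ⟨d₁, d₂, d₃, h, h3, rfl⟩ |
      ⟨d, d', r, h3, rfl⟩ | ⟨d, d', r, h3, rfl⟩) <;>
      simp [π, LinearMap.mem_ker, map_add, map_sub, map_smul,
        Finsupp.linearCombination_single, h3]
  let Φb : Stmt6Aux.Q p →ₗ[ℝ] Om := R.liftQ π hπ
  have hΦb : ∀ d : DT Om A B p, Φb (Stmt6Aux.mkS p d) = d.1.1 := fun d => by
    simp [Φb, Stmt6Aux.mkS, π, Finsupp.linearCombination_single]
  let k : Om →ₗ[ℝ] LinearMap.ker p :=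
    LinearMap.codRestrict _ (LinearMap.id - s ∘ₗ p)
      (fun ω => by simp [LinearMap.mem_ker, hs])
  let ψ : Om →ₗ[ℝ] Stmt6Aux.Q p :=
    Stmt6Aux.iota p ∘ₗ k + Stmt6Aux.tau p s hs ∘ₗ p
  have hψd : ∀ d : DT Om A B p, ψ d.1.1 = Stmt6Aux.mkS p d := by
    rintro ⟨⟨ω, a, b⟩, hd⟩
    dsimp only at hd ⊢
    have hk : (k ω : Om) = ω - s (p ω) := rfl
    have hwc : p (ω - s (a ⊗ₜ[ℝ] b)) = (0 : A) ⊗ₜ[ℝ] (0 : B) := by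
      simp [map_sub, hd, hs]
    have hx : p ((k ω : Om)) = (0 : A) ⊗ₜ[ℝ] (0 : B) := by
      simp [hk, map_sub, hd, hs]
    have e0 : (⟨((k ω : Om), 0, 0), hx⟩ : DT Om A B p)
        = ⟨(ω - s (a ⊗ₜ[ℝ] b), 0, 0), hwc⟩ :=
      Subtype.ext (show ((k ω : Om), (0 : A), (0 : B))
        = (ω - s (a ⊗ₜ[ℝ] b), (0 : A), (0 : B)) by rw [hk, hd])
    have e1 : Stmt6Aux.iota p (k ω)
        = Stmt6Aux.mkS p ⟨(ω - s (a ⊗ₜ[ℝ] b), 0, 0), hwc⟩ :=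
      congrArg (Stmt6Aux.mkS p) e0
    have e2 : Stmt6Aux.tau p s hs (p ω)
        = Stmt6Aux.mkS p ⟨(s (a ⊗ₜ[ℝ] b), a, b), hs _⟩ := by
      rw [hd, Stmt6Aux.tau_tmul]
    calc ψ ω = Stmt6Aux.iota p (k ω) + Stmt6Aux.tau p s hs (p ω) := rfl
      _ = Stmt6Aux.mkS p ⟨(ω - s (a ⊗ₜ[ℝ] b), 0, 0), hwc⟩
            + Stmt6Aux.mkS p ⟨(s (a ⊗ₜ[ℝ] b), a, b), hs _⟩ := by rw [e1, e2]
      _ = Stmt6Aux.mkS p ⟨(ω, a, b), hd⟩ :=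
          Stmt6Aux.chain p ω (s (a ⊗ₜ[ℝ] b)) a b hd (hs _) hwc
  have htau : ∀ x, Φb (Stmt6Aux.tau p s hs x) = s x := by
    have : Φb ∘ₗ Stmt6Aux.tau p s hs = s :=
      TensorProduct.ext' fun a b => by
        rw [LinearMap.comp_apply, Stmt6Aux.tau_tmul, hΦb]
    intro x
    exact LinearMap.ext_iff.1 this x
  have hcomp1 : Φb ∘ₗ ψ = LinearMap.id := by
    ext ω
    have h1 : Φb (Stmt6Aux.iota p (k ω)) = ω - s (p ω) := hΦb _
    calc Φb (ψ ω) = Φb (Stmt6Aux.iota p (k ω)) + Φb (Stmt6Aux.tau p s hs (p ω)) := by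
          simp [ψ, map_add]
      _ = (ω - s (p ω)) + s (p ω) := by rw [h1, htau]
      _ = ω := by abel
  have hcomp2 : ψ ∘ₗ Φb = LinearMap.id := by
    refine Submodule.linearMap_qext _ ?_
    refine Finsupp.lhom_ext fun d r => ?_
    have h1 : Finsupp.single d r = r • Finsupp.single d (1 : ℝ) := by
      simp [Finsupp.smul_single]
    rw [h1]
    simp only [LinearMap.comp_apply, map_smul, Submodule.mkQ_apply]
    have h2 : Φb ((Submodule.Quotient.mk (Finsupp.single d 1) : Stmt6Aux.Q p)) = d.1.1 :=
      hΦb d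
    rw [h2, hψd d]
    rfl
  exact ⟨LinearEquiv.ofLinear Φb ψ hcomp1 hcomp2, fun d => hΦb d⟩
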